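/- Suppose φ(G,f,g) (with G of cutwidth r+1) is the XOR system as above, so that it has no width-r resolution refutation. Then for any two sets S, T of at most r/3 variables, it cannot simultaneously hold that S implies T with the same parity and S implies T with opposite parity, both via width-2r/3 resolution. -/

import Mathlib

/-!
Two derivations of `⊕T` from `⊕S` with opposite signs combine (the second one run backwards, with
`S` XORed into every line) into a refutation of width `2r/3 + r/3 ≤ r`.

In a refutation, let `U_i` be the set of vertices whose constraint has been used an odd number of
times during the first `i` steps. An edge leaving `U_i` forces one of its four variables into the
`i`-th line, so the cut of `U_i` has at most `r` edges. The walk `U` starts empty and gains at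
most one vertex per step; it ends at all of `V`, since the last line is empty and the odd number
of right-hand sides `1` used must come from edge constraints. Uncrossing with the submodularity
of cuts makes the walk monotone, and a monotone walk is a vertex ordering of cutwidth at most `r`.
-/

open SimpleGraph

noncomputable def cutCount {V : Type*} (G : SimpleGraph V) (S : Set V) : ℕ :=
  {p : V × V | p.1 ∈ S ∧ p.2 ∉ S ∧ G.Adj p.1 p.2}.ncard

noncomputable def cutwidth {V : Type*} [Fintype V] (G : SimpleGraph V) : ℕ :=
  sInf { w | ∃ π : Fin (Fintype.card V) ≃ V,
    ∀ i : Fin (Fintype.card V), cutCount G (π '' {j | j ≤ i}) ≤ w }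

def EvenParity {V : Type*} [Fintype V] [DecidableEq V] (G : SimpleGraph V)
    [DecidableRel G.Adj] (f : Sym2 V → Bool) : Prop :=
  Even ((G.edgeFinset.filter fun e => f e = true).card)

/-- Variables of the XOR system `φ(G,f,g)`: `(false, v, u)` is `x_{(v,u)}` and
`(true, v, u)` is `y_{(v,u)}`, for each directed edge `(v,u)`. -/
abbrev XVar (V : Type*) := Bool × V × V

/-- The XOR constraint system `φ(G,f,g)`: a constraint is a pair (set of variables,
right-hand side). For each vertex `v` and neighbor `u`: `x_{(v,u)} ⊕ y_{(v,u)} = 0`;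
for each vertex `v`: `⊕_{u ∈ Γ(v)} y_{(v,u)} = 0`; for each edge `(u,v)`:
`x_{(u,v)} ⊕ x_{(v,u)} = f((u,v)) ⊕ g((u,v))`. -/
def phiSystem {V : Type*} [Fintype V] [DecidableEq V] (G : SimpleGraph V)
    [DecidableRel G.Adj] (f g : Sym2 V → Bool) : Set (Finset (XVar V) × Bool) :=
  {c | (∃ v u, G.Adj v u ∧ c = ({(false, v, u), (true, v, u)}, false))
    ∨ (∃ v : V, c = ((G.neighborFinset v).image (fun u => (true, v, u)), false))
    ∨ (∃ v u, G.Adj v u ∧ c = ({(false, v, u), (false, u, v)}, f s(v, u) ^^ g s(v, u)))}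

/-- `XorDerives Φ w S T sgn`: from the XOR constraint `⊕S = 0` one can derive
`⊕T = sgn` by a sequence of steps each XORing in a constraint of `Φ`, with every
intermediate constraint containing at most `w` variables. -/
def XorDerives {V : Type*} [DecidableEq V] (Φ : Set (Finset (XVar V) × Bool))
    (w : ℕ) (S T : Finset (XVar V)) (sgn : Bool) : Prop :=
  ∃ (t : ℕ) (Seq : ℕ → Finset (XVar V)) (c : ℕ → Finset (XVar V) × Bool),
    Seq 0 = S ∧ Seq t = T ∧
    (∀ i < t, c i ∈ Φ ∧ Seq (i + 1) = symmDiff (Seq i) (c i).1) ∧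
    (∀ i ≤ t, (Seq i).card ≤ w) ∧
    sgn = decide (Odd (((Finset.range t).filter fun i => (c i).2 = true).card))

/-- A width-`w` resolution refutation of `Φ`: a derivation of `⊕∅ = 1` from `⊕∅ = 0`. -/
def XorRefutable {V : Type*} [DecidableEq V] (Φ : Set (Finset (XVar V) × Bool))
    (w : ℕ) : Prop :=
  XorDerives Φ w ∅ ∅ true

open Finset Relation
open scoped symmDiff

lemma Nat.decide_odd_count_succ (p : ℕ → Prop) [DecidablePred p] (n : ℕ) :
    decide (Odd (Nat.count p (n + 1))) = (decide (Odd (Nat.count p n)) ^^ decide (p n)) := by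
  by_cases hp : p n <;> by_cases ho : Odd (Nat.count p n) <;>
    simp [Nat.count_succ, hp, ho, Nat.odd_add_one]

section XorCalculus

variable {α : Type*} [DecidableEq α] {Φ : Set (Finset α × Bool)} {w : ℕ}

/-- One step of a width-`w` derivation. A state is the current left-hand side together with
the parity of the right-hand sides XORed in so far. -/
def XorStep (Φ : Set (Finset α × Bool)) (w : ℕ) (p q : Finset α × Bool) : Prop :=
  ∃ d ∈ Φ, q = (p.1 ∆ d.1, p.2 ^^ d.2) ∧ #p.1 ≤ w ∧ #q.1 ≤ w

instance : Std.Symm (XorStep Φ w) where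
  symm := by
    rintro ⟨A, a⟩ ⟨B, b⟩ ⟨d, hd, hq, hA, hB⟩
    simp only [Prod.mk.injEq] at hq
    obtain ⟨rfl, rfl⟩ := hq
    exact ⟨d, hd, by simp [symmDiff_symmDiff_cancel_right], hB, hA⟩

lemma XorStep.symmDiff_xor {p q : Finset α × Bool} (h : XorStep Φ w p q) (R : Finset α)
    (e : Bool) : XorStep Φ (w + #R) (p.1 ∆ R, p.2 ^^ e) (q.1 ∆ R, q.2 ^^ e) := by
  obtain ⟨d, hd, rfl, hp, hq⟩ := h
  have card_le (A : Finset α) : #(A ∆ R) ≤ #A + #R :=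
    (card_le_card symmDiff_subset_union).trans (card_union_le A R)
  refine ⟨d, hd, ?_, (card_le _).trans (by omega), (card_le _).trans (by omega)⟩
  simp only [Prod.mk.injEq, symmDiff_right_comm _ R]
  exact ⟨trivial, by cases p.2 <;> cases d.2 <;> cases e <;> rfl⟩

lemma Relation.ReflTransGen.xorStep_symmDiff_xor {p q : Finset α × Bool}
    (h : ReflTransGen (XorStep Φ w) p q) (R : Finset α) (e : Bool) :
    ReflTransGen (XorStep Φ (w + #R)) (p.1 ∆ R, p.2 ^^ e) (q.1 ∆ R, q.2 ^^ e) :=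
  h.lift (fun p => (p.1 ∆ R, p.2 ^^ e)) fun _ _ h => h.symmDiff_xor R e

end XorCalculus

section XorDerivations

variable {V : Type*} [DecidableEq V] {Φ : Set (Finset (XVar V) × Bool)} {w : ℕ}

theorem XorDerives.reflTransGen {S T : Finset (XVar V)} {b : Bool}
    (h : XorDerives Φ w S T b) : ReflTransGen (XorStep Φ w) (S, false) (T, b) := by
  obtain ⟨t, s, c, rfl, rfl, hstep, hw, rfl⟩ := h
  simp only [← Nat.count_eq_card_filter_range]
  suffices ∀ k ≤ t, ReflTransGen (XorStep Φ w) (s 0, false)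
      (s k, decide (Odd (Nat.count (fun i => (c i).2 = true) k))) from this t le_rfl
  intro k hk
  induction k with
  | zero => simpa using ReflTransGen.refl
  | succ k ih =>
    refine (ih (by omega)).tail ⟨c k, (hstep k hk).1, ?_, hw k (by omega), hw (k + 1) hk⟩
    simp [(hstep k hk).2, Nat.decide_odd_count_succ]

theorem XorDerives.of_reflTransGen {S : Finset (XVar V)} (hS : #S ≤ w)
    {q : Finset (XVar V) × Bool} (h : ReflTransGen (XorStep Φ w) (S, false) q) :
    XorDerives Φ w S q.1 q.2 := by
  induction h with
  | refl => exact ⟨0, fun _ => S, fun _ => (∅, false), rfl, rfl, by simp, fun _ _ => hS, by simp⟩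
  | @tail p q _ hpq ih =>
    obtain ⟨t, s, c, h0, ht, hstep, hw, hsgn⟩ := ih
    obtain ⟨d, hd, rfl, -, hq⟩ := hpq
    have hcount : Nat.count (fun i => (Function.update c t d i).2 = true) t =
        Nat.count (fun i => (c i).2 = true) t := by
      simp only [Nat.count_eq_card_filter_range]
      exact congrArg card (filter_congr fun i hi => by
        simp [Function.update_of_ne (mem_range.1 hi).ne])
    refine ⟨t + 1, Function.update s (t + 1) (p.1 ∆ d.1), Function.update c t d,
      by simp [h0], by simp, fun i hi => ?_, fun i hi => ?_, ?_⟩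
    · rcases Nat.lt_succ_iff_lt_or_eq.mp hi with hi | rfl
      · simp [Function.update_of_ne, hi.ne, (show i ≠ t + 1 by omega), hstep i hi]
      · simp [ht, hd]
    · rcases Nat.lt_succ_iff_lt_or_eq.mp (Nat.lt_succ_of_le hi) with hi | rfl
      · simpa [show i ≠ t + 1 by omega] using hw i (by omega)
      · simpa using hq
    · simp only [← Nat.count_eq_card_filter_range] at hsgn ⊢
      simp [Nat.decide_odd_count_succ, hcount, hsgn]

theorem XorDerives.mono {S T : Finset (XVar V)} {b : Bool} {w' : ℕ}
    (h : XorDerives Φ w S T b) (hw : w ≤ w') : XorDerives Φ w' S T b :=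
  let ⟨t, s, c, h0, ht, hstep, hws, hsgn⟩ := h
  ⟨t, s, c, h0, ht, hstep, fun i hi => (hws i hi).trans hw, hsgn⟩

/-- Following the first derivation and then the second one backwards derives `⊕S = 1` from
`⊕S = 0`; XORing `S` into every line turns this into a refutation. -/
theorem xorRefutable_of_xorDerives {S T : Finset (XVar V)}
    (h₀ : XorDerives Φ w S T false) (h₁ : XorDerives Φ w S T true) :
    XorRefutable Φ (w + #S) := by
  have forth := h₀.reflTransGen.xorStep_symmDiff_xor S false
  have back := (Std.Symm.symm _ _ h₁.reflTransGen).xorStep_symmDiff_xor S true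
  simp only [symmDiff_self, bot_eq_empty, Bool.xor_self, Bool.false_xor] at forth back
  exact XorDerives.of_reflTransGen (by simp) (forth.trans back)

end XorDerivations

section Cutwidth

variable {V : Type*} [Fintype V] [DecidableEq V] (G : SimpleGraph V) [DecidableRel G.Adj]

def cutEdges (A : Finset V) : Finset (V × V) :=
  {p | p.1 ∈ A ∧ p.2 ∉ A ∧ G.Adj p.1 p.2}

lemma cutCount_coe (A : Finset V) : cutCount G ↑A = #(cutEdges G A) := by
  rw [cutCount, ← Set.ncard_coe_finset]
  congr 1
  ext p
  simp [cutEdges]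

lemma card_cutEdges_union_add_card_cutEdges_inter_le (A B : Finset V) :
    #(cutEdges G (A ∪ B)) + #(cutEdges G (A ∩ B)) ≤ #(cutEdges G A) + #(cutEdges G B) := by
  simp only [cutEdges, card_filter, ← sum_add_distrib]
  refine sum_le_sum fun p _ => ?_
  by_cases h1 : p.1 ∈ A <;> by_cases h2 : p.1 ∈ B <;> by_cases h3 : p.2 ∈ A <;>
    by_cases h4 : p.2 ∈ B <;> by_cases h5 : G.Adj p.1 p.2 <;> simp [h1, h2, h3, h4, h5]

structure IsCutWalk (r N : ℕ) (W : ℕ → Finset V) : Prop where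
  zero : W 0 = ∅
  last : W N = univ
  card_sdiff_le : ∀ i < N, #(W (i + 1) \ W i) ≤ 1
  cut_le : ∀ i ≤ N, #(cutEdges G (W i)) ≤ r

variable {G}

lemma IsCutWalk.update {r N : ℕ} {W : ℕ → Finset V} (hW : IsCutWalk G r N W) {k : ℕ}
    (hk : 0 < k) (hkN : k < N) {X : Finset V} (hX : X ⊆ W (k - 1) ∪ W k)
    (hX' : W k ∩ W (k + 1) ⊆ X) (hcut : #(cutEdges G X) ≤ r) :
    IsCutWalk G r N (Function.update W k X) where
  zero := by rw [Function.update_of_ne hk.ne, hW.zero]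
  last := by rw [Function.update_of_ne hkN.ne', hW.last]
  card_sdiff_le i hi := by
    rcases lt_trichotomy (i + 1) k with h | h | h
    · rw [Function.update_of_ne h.ne, Function.update_of_ne (by omega)]
      exact hW.card_sdiff_le i hi
    · subst h
      rw [Function.update_self, Function.update_of_ne (by omega)]
      refine (card_le_card fun x hx => ?_).trans (hW.card_sdiff_le i hi)
      rw [mem_sdiff] at hx ⊢
      have := hX hx.1
      rw [Nat.add_sub_cancel, mem_union] at this
      tauto
    · rcases Nat.lt_succ_iff_lt_or_eq.mp h with h | rfl
      · rw [Function.update_of_ne h.ne', Function.update_of_ne (by omega)]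
        exact hW.card_sdiff_le i hi
      · rw [Function.update_self, Function.update_of_ne (by omega)]
        refine (card_le_card fun x hx => ?_).trans (hW.card_sdiff_le k hi)
        have := @hX' x
        simp only [mem_sdiff, mem_inter] at hx this ⊢
        tauto
  cut_le i hi := by
    rcases eq_or_ne i k with rfl | h
    · rwa [Function.update_self]
    · rw [Function.update_of_ne h]
      exact hW.cut_le i hi

lemma IsCutWalk.exists_mono {r N : ℕ} {W : ℕ → Finset V} (hW : IsCutWalk G r N W) :
    ∃ W', IsCutWalk G r N W' ∧ ∀ i < N, W' i ⊆ W' (i + 1) := by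
  -- compares sets by the size of their cut first and by their cardinality second
  let weight (A : Finset V) : ℕ := #(cutEdges G A) * (Fintype.card V + 1) + #A
  obtain ⟨W, hW, hmin⟩ := (InvImage.wf (fun W : ℕ → Finset V => ∑ i ∈ range (N + 1), weight (W i))
    wellFounded_lt).has_min {W | IsCutWalk G r N W} ⟨W, hW⟩
  have not_lighter (k : ℕ) (hk : k ≤ N) (X : Finset V) (hX : weight X < weight (W k))
      (hW' : IsCutWalk G r N (Function.update W k X)) : False := by
    refine hmin _ hW' (sum_lt_sum (fun j _ => ?_) ⟨k, mem_range.2 (by omega), by simpa⟩)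
    rcases eq_or_ne j k with rfl | h
    · simpa using hX.le
    · simp [Function.update_of_ne h]
  refine ⟨W, hW, fun i hi => ?_⟩
  by_contra hsub
  have hi0 : 0 < i := Nat.pos_of_ne_zero (by rintro rfl; simp [hW.zero] at hsub)
  have hiN : i + 1 < N := lt_of_le_of_ne hi (by rintro h; simp [h, hW.last] at hsub)
  -- by submodularity, either `W i ∩ W (i + 1)` may replace `W i`, or `W i ∪ W (i + 1)` may
  -- replace `W (i + 1)` with a strictly smaller cut
  rcases le_or_gt #(cutEdges G (W i ∩ W (i + 1))) #(cutEdges G (W i)) with h | h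
  · have hcard : #(W i ∩ W (i + 1)) < #(W i) :=
      card_lt_card ⟨inter_subset_left, fun h' => hsub fun x hx => (mem_inter.1 (h' hx)).2⟩
    exact not_lighter i hi.le _ (by simp only [weight]; nlinarith)
      (hW.update hi0 hi (inter_subset_left.trans subset_union_right) subset_rfl
        (h.trans (hW.cut_le i hi.le)))
  · have hcut : #(cutEdges G (W i ∪ W (i + 1))) < #(cutEdges G (W (i + 1))) := by
      have := card_cutEdges_union_add_card_cutEdges_inter_le G (W i) (W (i + 1))
      omega
    have hcard : #(W i ∪ W (i + 1)) ≤ Fintype.card V := card_le_univ _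
    exact not_lighter (i + 1) hiN.le _ (by simp only [weight]; nlinarith)
      (hW.update (Nat.succ_pos i) hiN (by simp) (inter_subset_left.trans subset_union_right)
        (hcut.le.trans (hW.cut_le _ hiN.le)))

lemma cutwidth_le_of_isCutWalk {r N : ℕ} {W : ℕ → Finset V} (hW : IsCutWalk G r N W)
    (hmono : ∀ i < N, W i ⊆ W (i + 1)) : cutwidth G ≤ r := by
  have hex (v : V) : ∃ i, v ∈ W i := ⟨N, hW.last ▸ mem_univ v⟩
  let τ (v : V) : ℕ := Nat.find (hex v)
  have hτN (v : V) : τ v ≤ N := Nat.find_min' _ (hW.last ▸ mem_univ v)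
  have mem_iff (k : ℕ) (hk : k ≤ N) (v : V) : v ∈ W k ↔ τ v ≤ k := by
    refine ⟨fun h => Nat.find_min' _ h, fun h => ?_⟩
    induction k, h using Nat.le_induction with
    | base => exact Nat.find_spec (hex v)
    | succ k _ ih => exact hmono k (by omega) (ih (by omega))
  have hτ : Function.Injective τ := by
    intro u v huv
    obtain ⟨k, hk⟩ : ∃ k, τ v = k + 1 := Nat.exists_eq_succ_of_ne_zero fun h => by
      simpa [hW.zero] using (mem_iff 0 (Nat.zero_le N) v).2 h.le
    have mem (x : V) (hx : τ x = k + 1) : x ∈ W (k + 1) \ W k := by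
      rw [mem_sdiff, mem_iff _ (hx ▸ hτN x), mem_iff _ (by have := hτN x; omega)]
      omega
    exact card_le_one.1 (hW.card_sdiff_le k (by have := hτN v; omega)) u (mem u (huv.trans hk))
      v (mem v hk)
  let : LinearOrder V := LinearOrder.lift' τ hτ
  let π : Fin (Fintype.card V) ≃o V := Fintype.orderIsoFinOfCardEq V rfl
  refine Nat.sInf_le ⟨π.toEquiv, fun i => ?_⟩
  have himage : π.toEquiv '' {j | j ≤ i} = ↑(W (τ (π i))) := by
    ext v
    rw [mem_coe, mem_iff _ (hτN _)]
    exact Set.ext_iff.1 (π.image_Iic i) v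
  rw [himage, cutCount_coe]
  exact hW.cut_le _ (hτN _)

end Cutwidth

section Counting

variable {α β : Type*}

lemma mem_iff_odd_count_of_symmDiff [DecidableEq α] {s D : ℕ → Finset α} {n : ℕ}
    (h0 : s 0 = ∅) (hs : ∀ j < n, s (j + 1) = s j ∆ D j) (x : α) :
    x ∈ s n ↔ Odd (Nat.count (fun j => x ∈ D j) n) := by
  induction n with
  | zero => simp [h0]
  | succ n ih =>
    rw [hs n n.lt_succ_self, mem_symmDiff, ih fun j hj => hs j (by omega), Nat.count_succ]
    by_cases hx : x ∈ D n <;> simp [hx, Nat.odd_add_one]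

lemma Nat.count_eq_count_add_count {c : ℕ → β} {a b : β} (hab : a ≠ b) {p : ℕ → Prop}
    [DecidablePred p] [DecidableEq β] {n : ℕ} (hp : ∀ j < n, p j ↔ c j = a ∨ c j = b) :
    Nat.count p n = Nat.count (c · = a) n + Nat.count (c · = b) n := by
  induction n with
  | zero => simp
  | succ n ih =>
    simp only [Nat.count_succ, ih fun j hj => hp j (by omega), hp n n.lt_succ_self]
    by_cases ha : c n = a <;> by_cases hb : c n = b <;> simp_all <;> omega

lemma Nat.even_count_comp {c : ℕ → β} {P : β → Prop} [DecidablePred P] [DecidableEq β]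
    {n : ℕ} (h : ∀ j < n, P (c j) → Even (Nat.count (c · = c j) n)) :
    Even (Nat.count (fun j => P (c j)) n) := by
  simp only [Nat.count_eq_card_filter_range] at h ⊢
  rw [card_eq_sum_card_image c]
  refine even_sum _ fun d hd => ?_
  obtain ⟨j, hj, rfl⟩ := mem_image.1 hd
  rw [mem_filter, mem_range] at hj
  have hfilter : {i ∈ {i ∈ range n | P (c i)} | c i = c j} = {i ∈ range n | c i = c j} := by
    ext i
    simp only [mem_filter]
    exact ⟨fun h => ⟨h.1.1, h.2⟩, fun h => ⟨⟨h.1, h.2 ▸ hj.2⟩, h.2⟩⟩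
  rw [hfilter]
  exact h j hj.1 hj.2

end Counting

section PhiSystem

variable {V : Type*} [DecidableEq V] {f g : Sym2 V → Bool}

def linkCon (v u : V) : Finset (XVar V) × Bool := ({(false, v, u), (true, v, u)}, false)

def edgeCon (f g : Sym2 V → Bool) (v u : V) : Finset (XVar V) × Bool :=
  ({(false, v, u), (false, u, v)}, f s(v, u) ^^ g s(v, u))

lemma edgeCon_comm (v u : V) : edgeCon f g v u = edgeCon f g u v := by
  rw [edgeCon, edgeCon, pair_comm, Sym2.eq_swap]

lemma linkCon_ne_edgeCon (v u w z : V) : linkCon v u ≠ edgeCon f g w z := by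
  intro h
  have := congrArg (fun d => (true, v, u) ∈ d.1) h
  simp [linkCon, edgeCon] at this

variable [Fintype V] {G : SimpleGraph V} [DecidableRel G.Adj]

def vertexCon (G : SimpleGraph V) [DecidableRel G.Adj] (v : V) : Finset (XVar V) × Bool :=
  ((G.neighborFinset v).image fun u => (true, v, u), false)

/-- The variables `y_{vu}, x_{vu}, x_{uv}, y_{uv}` of the directed edge `p = (v, u)`. -/
def edgeVars (p : V × V) : Finset (XVar V) := {x | x.2 = p ∨ x.2 = p.swap}

lemma linkCon_ne_vertexCon (v u w : V) : linkCon v u ≠ vertexCon G w := by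
  intro h
  have := congrArg (fun d => (false, v, u) ∈ d.1) h
  simp [linkCon, vertexCon] at this

lemma vertexCon_injective (hconn : G.Connected) : Function.Injective (vertexCon G) := by
  intro v u h
  by_contra hvu
  obtain ⟨p⟩ := hconn v u
  cases p with
  | nil => exact hvu rfl
  | @cons _ w _ hvw _ =>
    have := congrArg (fun d => (true, v, w) ∈ d.1) h
    simp [vertexCon, hvw] at this
    exact hvu this.2.symm

lemma eq_linkCon_or_eq_vertexCon {d : Finset (XVar V) × Bool} (hd : d ∈ phiSystem G f g)
    {v u : V} (h : (true, v, u) ∈ d.1) : d = linkCon v u ∨ d = vertexCon G v := by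
  rcases hd with ⟨v', u', -, rfl⟩ | ⟨v', rfl⟩ | ⟨v', u', -, rfl⟩
  · simp only [mem_insert, mem_singleton, Prod.mk.injEq] at h
    simp_all [linkCon]
  · simp only [mem_image, Prod.mk.injEq] at h
    obtain ⟨-, -, -, rfl, -⟩ := h
    exact Or.inr rfl
  · simp at h

lemma eq_linkCon_or_eq_edgeCon {d : Finset (XVar V) × Bool} (hd : d ∈ phiSystem G f g)
    {v u : V} (h : (false, v, u) ∈ d.1) : d = linkCon v u ∨ d = edgeCon f g v u := by
  rcases hd with ⟨v', u', -, rfl⟩ | ⟨v', rfl⟩ | ⟨v', u', -, rfl⟩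
  · simp only [mem_insert, mem_singleton, Prod.mk.injEq] at h
    simp_all [linkCon]
  · simp at h
  · simp only [mem_insert, mem_singleton, Prod.mk.injEq] at h
    rcases h with ⟨-, rfl, rfl⟩ | ⟨-, rfl, rfl⟩
    · exact Or.inr rfl
    · exact Or.inr (edgeCon_comm _ _)

lemma exists_eq_edgeCon {d : Finset (XVar V) × Bool} (hd : d ∈ phiSystem G f g)
    (h : d.2 = true) : ∃ v u, G.Adj v u ∧ d = edgeCon f g v u := by
  rcases hd with ⟨v, u, -, rfl⟩ | ⟨v, rfl⟩ | ⟨v, u, hvu, rfl⟩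
  · simp at h
  · simp at h
  · exact ⟨v, u, hvu, rfl⟩

lemma disjoint_edgeVars {U : Finset V} {p q : V × V} (hp : p.1 ∈ U ∧ p.2 ∉ U)
    (hq : q.1 ∈ U ∧ q.2 ∉ U) (hpq : p ≠ q) : Disjoint (edgeVars p) (edgeVars q) := by
  refine disjoint_left.2 fun x hxp hxq => ?_
  simp only [edgeVars, mem_filter, mem_univ, true_and] at hxp hxq
  obtain ⟨p1, p2⟩ := p
  obtain ⟨q1, q2⟩ := q
  rcases hxp with h | h <;> rcases hxq with h' | h' <;> rw [h] at h' <;>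
    simp only [Prod.swap_prod_mk, Prod.mk.injEq] at h' <;> aesop

end PhiSystem

section Refutation

variable {V : Type*} [Fintype V] [DecidableEq V] {G : SimpleGraph V} [DecidableRel G.Adj]
  {f g : Sym2 V → Bool} {s : ℕ → Finset (XVar V)} {c : ℕ → Finset (XVar V) × Bool} {t i : ℕ}

lemma mem_iff_odd_count_linkCon_add_count_vertexCon (h0 : s 0 = ∅)
    (hs : ∀ j < t, c j ∈ phiSystem G f g ∧ s (j + 1) = s j ∆ (c j).1) (hi : i ≤ t) {v u : V}
    (hvu : G.Adj v u) :
    (true, v, u) ∈ s i ↔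
      Odd (Nat.count (c · = linkCon v u) i + Nat.count (c · = vertexCon G v) i) := by
  rw [mem_iff_odd_count_of_symmDiff h0 fun j hj => (hs j (by omega)).2,
    Nat.count_eq_count_add_count (linkCon_ne_vertexCon (G := G) v u v) fun j hj => ?_]
  refine ⟨eq_linkCon_or_eq_vertexCon (hs j (by omega)).1, ?_⟩
  rintro (h | h) <;> simp [h, linkCon, vertexCon, hvu]

lemma mem_iff_odd_count_linkCon_add_count_edgeCon (h0 : s 0 = ∅)
    (hs : ∀ j < t, c j ∈ phiSystem G f g ∧ s (j + 1) = s j ∆ (c j).1) (hi : i ≤ t) (v u : V) :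
    (false, v, u) ∈ s i ↔
      Odd (Nat.count (c · = linkCon v u) i + Nat.count (c · = edgeCon f g v u) i) := by
  rw [mem_iff_odd_count_of_symmDiff h0 fun j hj => (hs j (by omega)).2,
    Nat.count_eq_count_add_count (linkCon_ne_edgeCon v u v u) fun j hj => ?_]
  refine ⟨eq_linkCon_or_eq_edgeCon (hs j (by omega)).1, ?_⟩
  rintro (h | h) <;> simp [h, linkCon, edgeCon]

/-- Summing the parities of the four variables of an edge `vu`, each link constraint and the edge
constraint cancel, leaving the parities of the vertex constraints at `v` and at `u`. -/
lemma odd_count_vertexCon_iff (h0 : s 0 = ∅)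
    (hs : ∀ j < t, c j ∈ phiSystem G f g ∧ s (j + 1) = s j ∆ (c j).1) (hi : i ≤ t) {v u : V}
    (hvu : G.Adj v u) (hdisj : Disjoint (edgeVars (v, u)) (s i)) :
    Odd (Nat.count (c · = vertexCon G v) i) ↔ Odd (Nat.count (c · = vertexCon G u) i) := by
  have not_mem (x : XVar V) (hx : x.2 = (v, u) ∨ x.2 = (u, v)) : x ∉ s i :=
    disjoint_left.1 hdisj (by simpa [edgeVars] using hx)
  have h₁ := (mem_iff_odd_count_linkCon_add_count_vertexCon h0 hs hi hvu).not.1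
    (not_mem (true, v, u) (by simp))
  have h₂ := (mem_iff_odd_count_linkCon_add_count_edgeCon h0 hs hi v u).not.1
    (not_mem (false, v, u) (by simp))
  have h₃ := (mem_iff_odd_count_linkCon_add_count_edgeCon h0 hs hi u v).not.1
    (not_mem (false, u, v) (by simp))
  have h₄ := (mem_iff_odd_count_linkCon_add_count_vertexCon h0 hs hi hvu.symm).not.1
    (not_mem (true, u, v) (by simp))
  rw [edgeCon_comm u v] at h₃
  simp only [Nat.odd_iff] at h₁ h₂ h₃ h₄ ⊢
  omega

/-- Every edge leaving the set of vertices whose constraint has been used an odd number of times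
owns a variable of the current line, and distinct such edges own distinct variables. -/
lemma card_cutEdges_le (h0 : s 0 = ∅)
    (hs : ∀ j < t, c j ∈ phiSystem G f g ∧ s (j + 1) = s j ∆ (c j).1) (hi : i ≤ t) :
    #(cutEdges G {v | Odd (Nat.count (c · = vertexCon G v) i)}) ≤ #(s i) := by
  set U : Finset V := {v | Odd (Nat.count (c · = vertexCon G v) i)}
  have mem_cut {p : V × V} (hp : p ∈ cutEdges G U) : p.1 ∈ U ∧ p.2 ∉ U ∧ G.Adj p.1 p.2 := by
    simpa [cutEdges] using hp
  calc #(cutEdges G U)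
      ≤ #((cutEdges G U).biUnion fun p => edgeVars p ∩ s i) := by
        refine card_le_card_biUnion (fun p hp q hq hpq => ?_) fun p hp => ?_
        · exact (disjoint_edgeVars ⟨(mem_cut hp).1, (mem_cut hp).2.1⟩
            ⟨(mem_cut hq).1, (mem_cut hq).2.1⟩ hpq).mono
            inter_subset_left inter_subset_left
        · obtain ⟨hp₁, hp₂, hadj⟩ := mem_cut hp
          rw [← not_disjoint_iff_nonempty_inter]
          intro hdisj
          simp only [U, mem_filter, mem_univ, true_and] at hp₁ hp₂
          exact hp₂ ((odd_count_vertexCon_iff h0 hs hi hadj hdisj).1 hp₁)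
    _ ≤ #(s i) := card_le_card (biUnion_subset.2 fun _ _ => inter_subset_right)

lemma odd_count_vertexCon_of_refutation (hconn : G.Connected) (h0 : s 0 = ∅) (ht : s t = ∅)
    (hs : ∀ j < t, c j ∈ phiSystem G f g ∧ s (j + 1) = s j ∆ (c j).1)
    (hodd : Odd (Nat.count (fun j => (c j).2 = true) t)) (v : V) :
    Odd (Nat.count (c · = vertexCon G v) t) := by
  have iff_of_adj {u w : V} (huw : G.Adj u w) := odd_count_vertexCon_iff h0 hs le_rfl huw
    (by simp [ht])
  have iff_v (u : V) : Odd (Nat.count (c · = vertexCon G u) t) ↔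
      Odd (Nat.count (c · = vertexCon G v) t) := by
    obtain ⟨p⟩ := hconn u v
    induction p with
    | nil => rfl
    | cons huw _ ih => exact (iff_of_adj huw).trans ih
  -- otherwise every edge constraint, hence every right-hand side `1`, is used an even number
  -- of times
  by_contra hv
  refine Nat.not_even_iff_odd.2 hodd
    (Nat.even_count_comp (P := fun d : Finset (XVar V) × Bool => d.2 = true) fun j hj hj₂ => ?_)
  obtain ⟨a, b, hab, hcj⟩ := exists_eq_edgeCon (hs j hj).1 hj₂
  have hx := (mem_iff_odd_count_linkCon_add_count_edgeCon h0 hs le_rfl a b).not.1 (by simp [ht])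
  have hy := (mem_iff_odd_count_linkCon_add_count_vertexCon h0 hs le_rfl hab).not.1
    (by simp [ht])
  have hB := mt (iff_v a).1 hv
  rw [hcj]
  simp only [Nat.odd_iff, Nat.even_iff] at hx hy hB ⊢
  omega

theorem not_xorRefutable_phiSystem (hconn : G.Connected) {r : ℕ} (hcw : cutwidth G = r + 1) :
    ¬ XorRefutable (phiSystem G f g) r := by
  rintro ⟨t, s, c, h0, ht, hs, hw, hsgn⟩
  have hodd : Odd (Nat.count (fun j => (c j).2 = true) t) := by
    simpa [Nat.count_eq_card_filter_range] using hsgn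
  let U (i : ℕ) : Finset V := {v | Odd (Nat.count (c · = vertexCon G v) i)}
  have hflip (i : ℕ) (v : V) (hv : v ∈ U (i + 1) \ U i) : c i = vertexCon G v := by
    by_contra h
    simp only [U, mem_sdiff, mem_filter, mem_univ, true_and, Nat.count_succ, h, if_false,
      add_zero] at hv
    exact hv.2 hv.1
  have hU : IsCutWalk G r t U :=
    { zero := by simp [U]
      last := by simp [U, odd_count_vertexCon_of_refutation hconn h0 ht hs hodd]
      card_sdiff_le := fun i _ => card_le_one.2 fun a ha b hb =>
        vertexCon_injective hconn ((hflip i a ha).symm.trans (hflip i b hb))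
      cut_le := fun i hi => (card_cutEdges_le h0 hs hi).trans (hw i hi) }
  obtain ⟨W, hW, hmono⟩ := hU.exists_mono
  have := cutwidth_le_of_isCutWalk hW hmono
  omega

end Refutation

theorem phi_stable_parity_general {V : Type*} [Fintype V] [DecidableEq V]
    (G : SimpleGraph V) [DecidableRel G.Adj]
    (hconn : G.Connected)
    (r : ℕ) (hcw : cutwidth G = r + 1)
    (f g : Sym2 V → Bool)
    (S T : Finset (XVar V)) (hS : S.card ≤ r / 3) :
    ¬ (XorDerives (phiSystem G f g) (2 * r / 3) S T false ∧
       XorDerives (phiSystem G f g) (2 * r / 3) S T true) := fun ⟨h₀, h₁⟩ =>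
  not_xorRefutable_phiSystem hconn hcw
    ((xorRefutable_of_xorDerives h₀ h₁).mono (by omega))

/-- If `G` is connected, 3-regular, with cutwidth `r+1`, and `f, g` have different
parity, then for any sets `S, T` of at most `r/3` variables it cannot hold that
`S` derives `T` with even sign and also with odd sign, both via width-`2r/3`
resolution. -/
theorem phi_stable_parity {V : Type*} [Fintype V] [DecidableEq V]
    (G : SimpleGraph V) [DecidableRel G.Adj]
    (hconn : G.Connected) (hreg : ∀ v, G.degree v = 3)
    (r : ℕ) (hcw : cutwidth G = r + 1)
    (f g : Sym2 V → Bool) (hpar : ¬ (EvenParity G f ↔ EvenParity G g))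
    (S T : Finset (XVar V)) (hS : S.card ≤ r / 3) (hT : T.card ≤ r / 3) :
    ¬ (XorDerives (phiSystem G f g) (2 * r / 3) S T false ∧
       XorDerives (phiSystem G f g) (2 * r / 3) S T true) :=
  phi_stable_parity_general G hconn r hcw f g S T hS
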